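/- arXiv:2602.18410 — 2 statements merged into one kernel-verified Lean document; each statement's English description precedes it below -/
import Mathlib

section
/- Let $N \ge 1$ and suppose $\alpha_1,\dots,\alpha_N : \mathbb{N}_{\ge1} \to \mathbb{R}_{\ge0}$ and $\beta_1,\dots,\beta_N : \mathbb{N}_{\ge1} \to \mathbb{R}_{\ge0}$ are subadditive sequences, with limits $\alpha_i^\infty = \lim_p \alpha_i(p)/p$ and $\beta_i^\infty = \lim_q \beta_i(q)/q$, and $\beta_i^\infty > 0$ for all $i$. Define $L$ to be the infimum of all rationals $q/p > 0$ such that $\beta_i(qt) \ge \alpha_i(pt)$ for all $1 \le i \le N$ and all sufficiently large $t$. Then $L = \max_{1\le i\le N} \alpha_i^\infty / \beta_i^\infty$. -/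
/-!
By Fekete's argument a subadditive `β` lies above its linear asymptote, `β∞ · n ≤ β n`, while
`α (p t) / t → α∞ p` and `β (q t) / t → β∞ q`. Hence `q / p` is admissible only if
`α∞ p ≤ β∞ q` for every `i`, and it is admissible as soon as `α∞ p < β∞ q` for every `i`.
So the admissible ratios all lie above `M = max αᵢ∞/βᵢ∞` and include every rational above it,
whence their infimum is `M`.
-/

open Filter Topology

section Subadditive

variable {u : ℕ → ℝ} {l : ℝ}

lemma apply_mul_le_of_subadditive
    (hsub : ∀ m n, 1 ≤ m → 1 ≤ n → u (m + n) ≤ u m + u n) {p : ℕ} (hp : 1 ≤ p) :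
    ∀ t, 1 ≤ t → u (p * t) ≤ u p * t := by
  refine Nat.le_induction (by simp) fun t ht ih => ?_
  have hstep : u (p * t + p) ≤ u (p * t) + u p :=
    hsub _ _ (Nat.one_le_iff_ne_zero.2 (by positivity)) hp
  rw [mul_add_one, Nat.cast_add_one]
  linarith

lemma tendsto_apply_mul_div (hlim : Tendsto (fun n : ℕ => u n / n) atTop (𝓝 l))
    {p : ℕ} (hp : 0 < p) :
    Tendsto (fun t : ℕ => u (p * t) / t) atTop (𝓝 (l * p)) := by
  have hcomp : Tendsto (fun t : ℕ => u (p * t) / (p * t : ℕ)) atTop (𝓝 l) :=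
    hlim.comp (tendsto_atTop_mono (fun t => Nat.le_mul_of_pos_left t hp) tendsto_id)
  refine (hcomp.mul_const (p : ℝ)).congr' ?_
  filter_upwards [eventually_ge_atTop 1] with t ht
  have : (t : ℝ) ≠ 0 := by positivity
  have : (p : ℝ) ≠ 0 := by positivity
  push_cast
  field_simp

lemma mul_le_apply_of_subadditive
    (hsub : ∀ m n, 1 ≤ m → 1 ≤ n → u (m + n) ≤ u m + u n)
    (hlim : Tendsto (fun n : ℕ => u n / n) atTop (𝓝 l)) {p : ℕ} (hp : 1 ≤ p) :
    l * p ≤ u p := by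
  refine le_of_tendsto (tendsto_apply_mul_div hlim hp) ?_
  filter_upwards [eventually_ge_atTop 1] with t ht
  rw [div_le_iff₀ (by positivity)]
  exact apply_mul_le_of_subadditive hsub hp t ht

end Subadditive

section Comparison

variable {u v : ℕ → ℝ} {a b : ℝ} {p q : ℕ}

lemma mul_le_mul_of_eventually_apply_mul_le
    (hu : Tendsto (fun n : ℕ => u n / n) atTop (𝓝 a))
    (hv : Tendsto (fun n : ℕ => v n / n) atTop (𝓝 b)) (hp : 0 < p) (hq : 0 < q)
    (h : ∀ᶠ t in atTop, u (p * t) ≤ v (q * t)) :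
    a * p ≤ b * q :=
  le_of_tendsto_of_tendsto (tendsto_apply_mul_div hu hp) (tendsto_apply_mul_div hv hq) <|
    h.mono fun _ ht => div_le_div_of_nonneg_right ht (Nat.cast_nonneg _)

lemma eventually_apply_mul_le_of_mul_lt
    (hvsub : ∀ m n, 1 ≤ m → 1 ≤ n → v (m + n) ≤ v m + v n)
    (hu : Tendsto (fun n : ℕ => u n / n) atTop (𝓝 a))
    (hv : Tendsto (fun n : ℕ => v n / n) atTop (𝓝 b)) (hp : 0 < p) (hq : 0 < q)
    (hlt : a * p < b * q) :
    ∀ᶠ t in atTop, u (p * t) ≤ v (q * t) := by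
  filter_upwards [(tendsto_apply_mul_div hu hp).eventually_lt_const hlt,
    eventually_ge_atTop 1] with t hut ht
  have hvt : b * (q * t : ℕ) ≤ v (q * t) :=
    mul_le_apply_of_subadditive hvsub hv (Nat.one_le_iff_ne_zero.2 (by positivity))
  rw [div_lt_iff₀ (by positivity)] at hut
  push_cast at hvt
  linarith

end Comparison

lemma Rat.exists_eq_natCast_div_natCast {r : ℚ} (hr : 0 < r) :
    ∃ q p : ℕ, 0 < p ∧ 0 < q ∧ (r : ℝ) = q / p := by
  refine ⟨r.num.toNat, r.den, r.pos, by have := Rat.num_pos.2 hr; omega, ?_⟩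
  have hnum : ((r.num.toNat : ℤ) : ℝ) = r.num := by
    rw [Int.toNat_of_nonneg (Rat.num_pos.2 hr).le]
  rw [← Int.cast_natCast, hnum, Rat.cast_def]

lemma csInf_eq_of_forall_le_of_forall_rat_gt_mem {s : Set ℝ} {a : ℝ}
    (hle : ∀ x ∈ s, a ≤ x) (hmem : ∀ r : ℚ, a < r → (r : ℝ) ∈ s) : sInf s = a := by
  refine csInf_eq_of_forall_ge_of_forall_gt_exists_lt ?_ hle fun w hw => ?_
  · obtain ⟨r, hr⟩ := exists_rat_gt a
    exact ⟨r, hmem r hr⟩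
  · obtain ⟨r, har, hrw⟩ := exists_rat_btwn hw
    exact ⟨r, hmem r har, hrw⟩

theorem stmt_2_general (N : ℕ) (α β : Fin N → ℕ → ℝ)
    (hα0 : ∀ i p, 1 ≤ p → 0 ≤ α i p)
    (hβsub : ∀ i p p', 1 ≤ p → 1 ≤ p' → β i (p + p') ≤ β i p + β i p')
    (αinf βinf : Fin N → ℝ)
    (hαlim : ∀ i, Tendsto (fun p : ℕ => α i p / p) atTop (𝓝 (αinf i)))
    (hβlim : ∀ i, Tendsto (fun q : ℕ => β i q / q) atTop (𝓝 (βinf i)))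
    (hβpos : ∀ i, 0 < βinf i) :
    sInf {x : ℝ | ∃ q p : ℕ, 0 < p ∧ 0 < q ∧ x = (q : ℝ) / (p : ℝ) ∧
        ∃ T : ℕ, ∀ t, T ≤ t → ∀ i, α i (p * t) ≤ β i (q * t)}
      = ⨆ i, αinf i / βinf i := by
  have hαinf_nonneg (i) : 0 ≤ αinf i :=
    ge_of_tendsto (hαlim i) <| (eventually_ge_atTop 1).mono fun p hp =>
      div_nonneg (hα0 i p hp) (Nat.cast_nonneg p)
  have hle_iSup (i) : αinf i / βinf i ≤ ⨆ j, αinf j / βinf j :=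
    le_ciSup (f := fun j => αinf j / βinf j) (Set.finite_range _).bddAbove i
  have hiSup_nonneg : 0 ≤ ⨆ i, αinf i / βinf i :=
    Real.iSup_nonneg fun i => div_nonneg (hαinf_nonneg i) (hβpos i).le
  refine csInf_eq_of_forall_le_of_forall_rat_gt_mem ?_ fun r hr => ?_
  · rintro _ ⟨q, p, hp, hq, rfl, T, hT⟩
    refine Real.iSup_le (fun i => ?_) (by positivity)
    have := mul_le_mul_of_eventually_apply_mul_le (hαlim i) (hβlim i) hp hq
      (eventually_atTop.2 ⟨T, fun t ht => hT t ht i⟩)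
    rwa [div_le_div_iff₀ (hβpos i) (by positivity), mul_comm (q : ℝ)]
  · obtain ⟨q, p, hp, hq, hr_eq⟩ :=
      Rat.exists_eq_natCast_div_natCast (by exact_mod_cast hiSup_nonneg.trans_lt hr)
    refine ⟨q, p, hp, hq, hr_eq, eventually_atTop.1 <| eventually_all.2 fun i => ?_⟩
    refine eventually_apply_mul_le_of_mul_lt (hβsub i) (hαlim i) (hβlim i) hp hq ?_
    have := (hle_iSup i).trans_lt (hr_eq ▸ hr)
    rwa [div_lt_div_iff₀ (hβpos i) (by positivity), mul_comm (q : ℝ)] at this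

/-- The numerical core of the finite-testing principle: for finitely many nonnegative
subadditive sequences `αᵢ, βᵢ` with limits `αᵢ^∞ = lim αᵢ(p)/p`, `βᵢ^∞ = lim βᵢ(q)/q > 0`,
the infimum `L` of admissible rationals `q/p` (those with `βᵢ(qt) ≥ αᵢ(pt)` for all `i`
and all large `t`) equals `max_i αᵢ^∞/βᵢ^∞`. -/
theorem stmt_2 (N : ℕ) (hN : 1 ≤ N) (α β : Fin N → ℕ → ℝ)
    (hα0 : ∀ i p, 1 ≤ p → 0 ≤ α i p) (hβ0 : ∀ i p, 1 ≤ p → 0 ≤ β i p)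
    (hαsub : ∀ i p p', 1 ≤ p → 1 ≤ p' → α i (p + p') ≤ α i p + α i p')
    (hβsub : ∀ i p p', 1 ≤ p → 1 ≤ p' → β i (p + p') ≤ β i p + β i p')
    (αinf βinf : Fin N → ℝ)
    (hαlim : ∀ i, Tendsto (fun p : ℕ => α i p / p) atTop (𝓝 (αinf i)))
    (hβlim : ∀ i, Tendsto (fun q : ℕ => β i q / q) atTop (𝓝 (βinf i)))
    (hβpos : ∀ i, 0 < βinf i) :
    sInf {x : ℝ | ∃ q p : ℕ, 0 < p ∧ 0 < q ∧ x = (q : ℝ) / (p : ℝ) ∧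
        ∃ T : ℕ, ∀ t, T ≤ t → ∀ i, α i (p * t) ≤ β i (q * t)}
      = ⨆ i, αinf i / βinf i :=
  stmt_2_general N α β hα0 hβsub αinf βinf hαlim hβlim hβpos
end

section
/- Let $\mathfrak{a}_p \subseteq k[[x,y]]$ be the monomial ideal generated by all monomials $x^i y^j$ with $i + 2j \ge 3p$, and $\mathfrak{b}_q$ the monomial ideal generated by all $x^i y^j$ with $2i + j \ge 5q$. Then for positive integers $p, q$: $\mathfrak{b}_{qt} \subseteq \mathfrak{a}_{pt}$ for all $t \ge 1$ if and only if $q/p \ge 6/5$. Moreover each $\mathfrak{a}_p$ is integrally closed, so the Łojasiewicz exponent of the filtration pair is $6/5$. -/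
/-- Integral closure of an ideal via equations of integral dependence. -/
def idealIntClosure {R : Type*} [CommRing R] (I : Ideal R) : Set R :=
  {x | ∃ n : ℕ, 0 < n ∧ ∃ c : ℕ → R,
    (∀ i, 1 ≤ i → i ≤ n → c i ∈ I ^ i) ∧
    x ^ n + ∑ i ∈ Finset.Icc 1 n, c i * x ^ (n - i) = 0}

/-- `𝔞_p ⊆ k[[x,y]]`: the monomial ideal generated by all `x^i y^j` with `i + 2j ≥ 3p`. -/
noncomputable def aId (k : Type*) [Field k] (p : ℕ) : Ideal (MvPowerSeries (Fin 2) k) :=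
  Ideal.span {m : MvPowerSeries (Fin 2) k | ∃ i j : ℕ, 3 * p ≤ i + 2 * j ∧
    m = (MvPowerSeries.X 0 : MvPowerSeries (Fin 2) k) ^ i *
        (MvPowerSeries.X 1 : MvPowerSeries (Fin 2) k) ^ j}

/-- `𝔟_q ⊆ k[[x,y]]`: the monomial ideal generated by all `x^i y^j` with `2i + j ≥ 5q`. -/
noncomputable def bId (k : Type*) [Field k] (q : ℕ) : Ideal (MvPowerSeries (Fin 2) k) :=
  Ideal.span {m : MvPowerSeries (Fin 2) k | ∃ i j : ℕ, 5 * q ≤ 2 * i + j ∧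
    m = (MvPowerSeries.X 0 : MvPowerSeries (Fin 2) k) ^ i *
        (MvPowerSeries.X 1 : MvPowerSeries (Fin 2) k) ^ j}


/-! With `x` of weight 1 and `y` of weight 2, `𝔞_r` is exactly the ideal of power series of
weighted order `≥ 3r`: a series of weighted order `≥ N` splits as `x^N a + y b` with `b` of order
`≥ N - 2`. Weighted order is additive on the domain `k[[x,y]]`, so in an equation
`x^n + ∑ cᵢ x^(n-i) = 0` with `cᵢ ∈ 𝔞_r^i` and `ord x < 3r`, the term `x^n` would have strictly
smaller order than all the others; hence `𝔞_r` is integrally closed.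

Since `2i + j ≥ 5u` forces `i + 2j ≥ ⌈5u/2⌉`, with equality for `x^⌈5u/2⌉`, one gets
`𝔟_u ⊆ 𝔞_s ↔ 6s ≤ 5u + 1`; along even multiples `u = 2qt`, `s = 2pt` this reads `6p ≤ 5q`. -/

open Finsupp

theorem subset_idealIntClosure {A : Type*} [CommRing A] (I : Ideal A) :
    (I : Set A) ⊆ idealIntClosure I := by
  refine fun x hx => ⟨1, one_pos, fun _ => -x, fun i hi1 hi => ?_, by simp⟩
  obtain rfl := le_antisymm hi hi1
  simpa using hx

namespace MvPowerSeries

variable {σ R : Type*}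

section CommSemiring

variable [CommSemiring R]

def weightedOrderIdeal (w : σ → ℕ) (n : ℕ) : Ideal (MvPowerSeries σ R) where
  carrier := {f | (n : ℕ∞) ≤ f.weightedOrder w}
  zero_mem' := by simp
  add_mem' hf hg := (le_min hf hg).trans (min_weightedOrder_le_add w)
  smul_mem' _ _ hf := hf.trans (le_add_self.trans (le_weightedOrder_mul w))

variable {w : σ → ℕ}

theorem mem_weightedOrderIdeal {n : ℕ} {f : MvPowerSeries σ R} :
    f ∈ weightedOrderIdeal w n ↔ (n : ℕ∞) ≤ f.weightedOrder w :=
  Iff.rfl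

theorem weightedOrderIdeal_antitone :
    Antitone (weightedOrderIdeal w : ℕ → Ideal (MvPowerSeries σ R)) :=
  fun _ _ hmn _ hf => (Nat.cast_le.2 hmn).trans (mem_weightedOrderIdeal.1 hf)

theorem mul_mem_weightedOrderIdeal {m n : ℕ} {f g : MvPowerSeries σ R}
    (hf : f ∈ weightedOrderIdeal w m) (hg : g ∈ weightedOrderIdeal w n) :
    f * g ∈ weightedOrderIdeal w (m + n) := by
  rw [mem_weightedOrderIdeal, Nat.cast_add]
  exact (add_le_add hf hg).trans (le_weightedOrder_mul w)

theorem pow_mem_weightedOrderIdeal {n : ℕ} {f : MvPowerSeries σ R}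
    (hf : f ∈ weightedOrderIdeal w n) (m : ℕ) : f ^ m ∈ weightedOrderIdeal w (m * n) := by
  rw [mem_weightedOrderIdeal, Nat.cast_mul, ← nsmul_eq_mul]
  exact (nsmul_le_nsmul_right hf m).trans (le_weightedOrder_pow w m)

theorem weightedOrderIdeal_pow_le (n m : ℕ) :
    weightedOrderIdeal w n ^ m ≤ (weightedOrderIdeal w (m * n) : Ideal (MvPowerSeries σ R)) := by
  induction m with
  | zero => exact fun f _ => by simp [mem_weightedOrderIdeal]
  | succ m ih =>
    rw [pow_succ, Ideal.mul_le, add_mul, one_mul]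
    exact fun f hf g hg => mul_mem_weightedOrderIdeal (ih hf) hg

end CommSemiring

variable {w : σ → ℕ}

theorem weightedOrder_pow [Semiring R] [NoZeroDivisors R] [Nontrivial R]
    (f : MvPowerSeries σ R) (m : ℕ) : (f ^ m).weightedOrder w = m • f.weightedOrder w := by
  induction m with
  | zero => simp
  | succ m ih => rw [pow_succ, weightedOrder_mul, ih, succ_nsmul]

theorem idealIntClosure_weightedOrderIdeal [CommRing R] [NoZeroDivisors R] (n : ℕ) :
    idealIntClosure (weightedOrderIdeal w n : Ideal (MvPowerSeries σ R)) =
      (weightedOrderIdeal w n : Ideal (MvPowerSeries σ R)) := by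
  refine subset_antisymm ?_ (subset_idealIntClosure _)
  rintro x ⟨m, -, c, hc, hx⟩
  by_contra hxn
  rw [SetLike.mem_coe, mem_weightedOrderIdeal, not_le] at hxn
  obtain ⟨ω, hω⟩ := ENat.ne_top_iff_exists.1 hxn.ne_top
  obtain ⟨d, hd, -⟩ := exists_coeff_ne_zero_and_weightedOrder w (by rw [← hω, ENat.toNat_natCast])
  have : Nontrivial R := nontrivial_of_ne _ _ hd
  have hωn : ω < n := by exact_mod_cast hω ▸ hxn
  -- every lower term `c i * x ^ (m - i)` has order `> m * ω`, the order of `x ^ m`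
  have hsum : ∑ i ∈ Finset.Icc 1 m, c i * x ^ (m - i) ∈ weightedOrderIdeal w (m * ω + 1) := by
    refine Ideal.sum_mem _ fun i hi => ?_
    obtain ⟨hi1, him⟩ := Finset.mem_Icc.1 hi
    have hterm := mul_mem_weightedOrderIdeal (weightedOrderIdeal_pow_le n i (hc i hi1 him))
      (pow_mem_weightedOrderIdeal (w := w) (n := ω) hω.le (m - i))
    refine weightedOrderIdeal_antitone ?_ hterm
    have h1 : i * (ω + 1) ≤ i * n := Nat.mul_le_mul_left i hωn
    have h2 : (m - i) * ω + i * ω = m * ω := by rw [← add_mul, Nat.sub_add_cancel him]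
    nlinarith
  have hxm : x ^ m ∈ weightedOrderIdeal w (m * ω + 1) := by
    rw [eq_neg_of_add_eq_zero_left hx]
    exact neg_mem hsum
  rw [mem_weightedOrderIdeal, weightedOrder_pow, ← hω, nsmul_eq_mul] at hxm
  exact absurd hxm (by norm_cast; omega)

theorem weight_one_two (d : Fin 2 →₀ ℕ) : weight ![1, 2] d = d 0 + 2 * d 1 := by
  simp [weight_eq_sum, Fin.sum_univ_two, mul_comm]

section CommSemiring

variable [CommSemiring R]

def xyMonomials (N : ℕ) : Set (MvPowerSeries (Fin 2) R) :=
  {m | ∃ i j : ℕ, N ≤ i + 2 * j ∧ m = X 0 ^ i * X 1 ^ j}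

theorem X0_pow_mul_X1_pow_eq (i j : ℕ) :
    (X 0 ^ i * X 1 ^ j : MvPowerSeries (Fin 2) R) = monomial (single 0 i + single 1 j) 1 := by
  rw [X_pow_eq, X_pow_eq, monomial_mul_monomial, one_mul]

theorem span_xyMonomials_le (N : ℕ) :
    Ideal.span (xyMonomials N) ≤
      (weightedOrderIdeal ![1, 2] N : Ideal (MvPowerSeries (Fin 2) R)) := by
  classical
  rw [Ideal.span_le]
  rintro _ ⟨i, j, hij, rfl⟩
  refine le_weightedOrder _ fun d hd => ?_
  rw [X0_pow_mul_X1_pow_eq, coeff_monomial, if_neg]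
  rintro rfl
  rw [weight_one_two, Nat.cast_lt] at hd
  simp only [coe_add, Pi.add_apply, single_eq_same, single_eq_of_ne, ne_eq, zero_ne_one,
    one_ne_zero, not_false_eq_true, add_zero, zero_add] at hd
  omega

theorem X1_mul_mem_span_xyMonomials {N : ℕ} {f : MvPowerSeries (Fin 2) R}
    (hf : f ∈ Ideal.span (xyMonomials (N - 2))) : X 1 * f ∈ Ideal.span (xyMonomials N) := by
  induction hf using Submodule.span_induction with
  | mem _ h =>
    obtain ⟨i, j, hij, rfl⟩ := h
    exact Ideal.subset_span ⟨i, j + 1, by omega, by ring⟩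
  | zero => simp
  | add _ _ _ _ hf hg => rw [mul_add]; exact add_mem hf hg
  | smul c _ _ hf => rw [smul_eq_mul, mul_left_comm]; exact Ideal.mul_mem_left _ c hf

end CommSemiring

theorem weightedOrderIdeal_le_span_xyMonomials [CommRing R] (N : ℕ) :
    (weightedOrderIdeal ![1, 2] N : Ideal (MvPowerSeries (Fin 2) R)) ≤
      Ideal.span (xyMonomials N) := by
  induction N using Nat.strong_induction_on with
  | _ N ih =>
  intro f hf
  rcases N.eq_zero_or_pos with rfl | hN
  · have h1 : (1 : MvPowerSeries (Fin 2) R) ∈ Ideal.span (xyMonomials 0) :=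
      Ideal.subset_span ⟨0, 0, le_rfl, by simp⟩
    simpa using Ideal.mul_mem_left _ f h1
  have hf' : ∀ d : Fin 2 →₀ ℕ, d 0 + 2 * d 1 < N → coeff d f = 0 := fun d hd =>
    coeff_eq_zero_of_lt_weightedOrder _
      (lt_of_lt_of_le (by rw [weight_one_two]; exact_mod_cast hd) hf)
  -- split `f` into its terms free of `y`, all divisible by `x ^ N`, and a multiple of `y`
  let A : MvPowerSeries (Fin 2) R := fun d => if d 1 = 0 then coeff d f else 0
  have hA : ∀ d, coeff d A = if d 1 = 0 then coeff d f else 0 := fun _ => rfl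
  obtain ⟨a, ha⟩ : X 0 ^ N ∣ A := X_pow_dvd_iff.2 fun d hd => by
    rw [hA]
    split_ifs with h1
    · exact hf' d (by omega)
    · rfl
  obtain ⟨b, hb⟩ : X 1 ∣ f - A := X_dvd_iff.2 fun d hd => by simp [hA, hd]
  have hb' : b ∈ weightedOrderIdeal ![1, 2] (N - 2) := nat_le_weightedOrder _ fun d hd => by
    have := congrArg (coeff (single 1 1 + d)) hb
    rw [X, coeff_monomial_mul, if_pos le_self_add, add_tsub_cancel_left, one_mul, map_sub, hA,
      if_neg (by simp), sub_zero] at this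
    rw [← this]
    refine hf' _ ?_
    rw [weight_one_two] at hd
    simp only [coe_add, Pi.add_apply, single_eq_same, single_eq_of_ne, ne_eq, zero_ne_one,
      not_false_eq_true, zero_add]
    omega
  have hfab : f = X 0 ^ N * a + X 1 * b := by rw [← ha, ← hb]; ring
  rw [hfab]
  exact add_mem (Ideal.mul_mem_right _ _ (Ideal.subset_span ⟨N, 0, by omega, by simp⟩))
    (X1_mul_mem_span_xyMonomials (ih (N - 2) (by omega) hb'))

end MvPowerSeries

section LojasiewiczExample

open MvPowerSeries

variable (k : Type*) [Field k]

theorem aId_eq_weightedOrderIdeal (r : ℕ) : aId k r = weightedOrderIdeal ![1, 2] (3 * r) :=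
  le_antisymm (span_xyMonomials_le _) (weightedOrderIdeal_le_span_xyMonomials _)

theorem idealIntClosure_aId (r : ℕ) : idealIntClosure (aId k r) = aId k r := by
  rw [aId_eq_weightedOrderIdeal, idealIntClosure_weightedOrderIdeal]

theorem X0_pow_mem_aId_iff {r i : ℕ} : X 0 ^ i ∈ aId k r ↔ 3 * r ≤ i := by
  rw [aId_eq_weightedOrderIdeal, mem_weightedOrderIdeal, X_pow_eq,
    weightedOrder_monomial_of_ne_zero _ one_ne_zero, weight_one_two, Nat.cast_le]
  simp

theorem bId_le_aId_iff (s u : ℕ) : bId k u ≤ aId k s ↔ 6 * s ≤ 5 * u + 1 := by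
  constructor
  · intro h
    -- the worst generator of `bId k u` is the power of `x` of exponent `⌈5u/2⌉`
    have hx : (X 0 ^ ((5 * u + 1) / 2) : MvPowerSeries (Fin 2) k) ∈ bId k u :=
      Ideal.subset_span ⟨(5 * u + 1) / 2, 0, by omega, by simp⟩
    have := (X0_pow_mem_aId_iff k).1 (h hx)
    omega
  · intro h
    rw [bId, Ideal.span_le]
    rintro _ ⟨i, j, hij, rfl⟩
    exact Ideal.subset_span ⟨i, j, by omega, rfl⟩

theorem bId_mul_le_aId_mul {p q : ℕ} (h : 6 * p ≤ 5 * q) (t : ℕ) :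
    bId k (q * t) ≤ aId k (p * t) := by
  rw [bId_le_aId_iff]
  nlinarith

theorem bId_mul_le_aId_mul_iff {p q t : ℕ} (ht : 0 < t) :
    bId k (q * (2 * t)) ≤ aId k (p * (2 * t)) ↔ 6 * p ≤ 5 * q := by
  rw [bId_le_aId_iff, show 6 * (p * (2 * t)) = 2 * (6 * p * t) by ring,
    show 5 * (q * (2 * t)) = 2 * (5 * q * t) by ring]
  constructor
  · intro h
    exact Nat.le_of_mul_le_mul_right (by omega) ht
  · intro h
    have := Nat.mul_le_mul_right t h
    omega

end LojasiewiczExample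

theorem six_div_five_le_div_iff {p q : ℕ} (hp : 0 < p) :
    (6 : ℝ) / 5 ≤ q / p ↔ 6 * p ≤ 5 * q := by
  rw [div_le_div_iff₀ (by norm_num) (by exact_mod_cast hp)]
  norm_cast
  rw [mul_comm q]

theorem stmt_5_general (k : Type*) [Field k] (p q : ℕ) (hp : 0 < p) :
    (∀ r : ℕ, 0 < r → idealIntClosure (aId k r) = (↑(aId k r) : Set (MvPowerSeries (Fin 2) k))) ∧
    ((∀ t : ℕ, 1 ≤ t → bId k (q * t) ≤ aId k (p * t)) ↔ (6 : ℝ) / 5 ≤ (q : ℝ) / (p : ℝ)) ∧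
    sInf {x : ℝ | ∃ p' q' : ℕ, 0 < p' ∧ 0 < q' ∧ x = (q' : ℝ) / (p' : ℝ) ∧
        ∃ T : ℕ, ∀ t, T ≤ t →
          (↑(bId k (q' * t)) : Set (MvPowerSeries (Fin 2) k)) ⊆
            idealIntClosure (aId k (p' * t))}
      = 6 / 5 := by
  refine ⟨fun r _ => idealIntClosure_aId k r, ?_, ?_⟩
  · rw [six_div_five_le_div_iff hp]
    exact ⟨fun h => (bId_mul_le_aId_mul_iff k one_pos).1 (h 2 one_le_two),
      fun h t _ => bId_mul_le_aId_mul k h t⟩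
  · refine IsLeast.csInf_eq ⟨⟨5, 6, by norm_num, by norm_num, by norm_num, 0, fun t _ => ?_⟩, ?_⟩
    · rw [idealIntClosure_aId, SetLike.coe_subset_coe]
      exact bId_mul_le_aId_mul k (by norm_num) t
    · rintro _ ⟨p', q', hp', -, rfl, T, hT⟩
      have hT' := hT (2 * (T + 1)) (by omega)
      rw [idealIntClosure_aId, SetLike.coe_subset_coe] at hT'
      exact (six_div_five_le_div_iff hp').2 ((bId_mul_le_aId_mul_iff k T.succ_pos).1 hT')

/-- Each `𝔞_p` is integrally closed; for positive `p, q` one has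
`𝔟_{qt} ⊆ 𝔞_{pt}` for all `t ≥ 1` iff `q/p ≥ 6/5`; and the Łojasiewicz exponent of
the filtration pair `(𝔞_•, 𝔟_•)` equals `6/5`. -/
theorem stmt_5 (k : Type*) [Field k] (p q : ℕ) (hp : 0 < p) (hq : 0 < q) :
    (∀ r : ℕ, 0 < r → idealIntClosure (aId k r) = (↑(aId k r) : Set (MvPowerSeries (Fin 2) k))) ∧
    ((∀ t : ℕ, 1 ≤ t → bId k (q * t) ≤ aId k (p * t)) ↔ (6 : ℝ) / 5 ≤ (q : ℝ) / (p : ℝ)) ∧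
    sInf {x : ℝ | ∃ p' q' : ℕ, 0 < p' ∧ 0 < q' ∧ x = (q' : ℝ) / (p' : ℝ) ∧
        ∃ T : ℕ, ∀ t, T ≤ t →
          (↑(bId k (q' * t)) : Set (MvPowerSeries (Fin 2) k)) ⊆
            idealIntClosure (aId k (p' * t))}
      = 6 / 5 :=
  stmt_5_general k p q hp
end
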